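/- Let α ∈ (−1, 1), set β := √(1 − α²), and let λ > 0 satisfy λ > α and λα < 1. Let X and Y be independent standard normal random variables and define G(η, σ) := ℙ(X ≥ η and αX + βY ≥ σ). Then lim_{η → ∞} (−2β² · log G(η, λη)) / ((1 + λ² − 2λα) · η²) = 1; that is, G(η, σ) = exp(−(1 + o(1)) · (η² + σ² − 2ησα)/(2β²)) as η → ∞ along σ = λη. -/

import Mathlib

/-!
Upper bound (Chernoff): on the event, `t (X - η) + u (αX + βY - σ) ≥ 0` for all `t, u ≥ 0`,
and `tX + u(αX + βY)` is centred Gaussian with variance `t² + 2αtu + u²`. Optimising gives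
`t = (η - ασ)/β²`, `u = (σ - αη)/β²`, nonnegative when `αη ≤ σ` and `ασ ≤ η`, and the bound
`G(η, σ) ≤ exp (-(η² + σ² - 2αησ)/(2β²))`.

Lower bound: the event contains the box `[η, η + 1] × [c, c + 1]` with `c = (σ - αη + 1)/β`,
whose mass is at least `φ(η + 1) φ(c + 1)`, `φ` the standard normal density.

Along `σ = λη` both bounds give `-2β² log G(η, λη) = (1 + λ² - 2λα) η² + O(η)`.
-/

open MeasureTheory

noncomputable def stdGaussian : Measure ℝ :=
  volume.withDensity fun t => ENNReal.ofReal (Real.exp (-t ^ 2 / 2) / Real.sqrt (2 * Real.pi))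

open ProbabilityTheory hiding stdGaussian
open Real Filter Topology

lemma stdGaussian_eq_gaussianReal : stdGaussian = gaussianReal 0 1 := by
  rw [gaussianReal_of_var_ne_zero 0 one_ne_zero, stdGaussian]
  congr 1 with t
  simp [gaussianPDF_def, gaussianPDFReal_def, div_eq_inv_mul]

lemma integral_exp_mul_gaussianReal_zero_one (c : ℝ) :
    ∫ x, exp (c * x) ∂gaussianReal 0 1 = exp (c ^ 2 / 2) := by
  simpa [mgf] using congrFun (mgf_fun_id_gaussianReal (μ := 0) (v := 1)) c

lemma integrable_exp_linear_gaussianReal_prod (a b : ℝ) :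
    Integrable (fun p : ℝ × ℝ => exp (a * p.1 + b * p.2))
      ((gaussianReal 0 1).prod (gaussianReal 0 1)) := by
  simpa only [exp_add] using
    (integrable_exp_mul_gaussianReal (μ := 0) (v := 1) a).mul_prod
      (integrable_exp_mul_gaussianReal (μ := 0) (v := 1) b)

lemma integral_exp_linear_gaussianReal_prod (a b : ℝ) :
    ∫ p : ℝ × ℝ, exp (a * p.1 + b * p.2) ∂(gaussianReal 0 1).prod (gaussianReal 0 1)
      = exp ((a ^ 2 + b ^ 2) / 2) := by
  simp only [exp_add]
  rw [integral_prod_mul (fun x => exp (a * x)) (fun y => exp (b * y)),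
    integral_exp_mul_gaussianReal_zero_one, integral_exp_mul_gaussianReal_zero_one, ← exp_add,
    add_div]

lemma gaussianReal_prod_real_linear_ge_le_exp (a b ε : ℝ) :
    ((gaussianReal 0 1).prod (gaussianReal 0 1)).real {p | ε ≤ a * p.1 + b * p.2}
      ≤ exp (-ε + (a ^ 2 + b ^ 2) / 2) := by
  have h := measure_ge_le_exp_mul_mgf (μ := (gaussianReal 0 1).prod (gaussianReal 0 1))
    (X := fun p => a * p.1 + b * p.2) ε zero_le_one (by
      simpa only [one_mul] using integrable_exp_linear_gaussianReal_prod a b)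
  simpa only [mgf, one_mul, neg_one_mul, integral_exp_linear_gaussianReal_prod, ← exp_add] using h

lemma gaussianPDFReal_add_one_le_gaussianReal_real_Icc {a : ℝ} (ha : 0 ≤ a) :
    gaussianPDFReal 0 1 (a + 1) ≤ (gaussianReal 0 1).real (Set.Icc a (a + 1)) := by
  have h := setIntegral_ge_of_const_le_real (μ := volume) (s := Set.Icc a (a + 1))
    (c := gaussianPDFReal 0 1 (a + 1)) measurableSet_Icc (by simp)
    (fun x (hx : x ∈ Set.Icc a (a + 1)) => ?_) (integrable_gaussianPDFReal 0 1).integrableOn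
  · rw [measureReal_def, gaussianReal_apply_eq_integral 0 one_ne_zero,
      ENNReal.toReal_ofReal (integral_nonneg fun x => gaussianPDFReal_nonneg 0 1 x)]
    simpa using h
  · simp only [gaussianPDFReal_def]
    gcongr <;> linarith [hx.1, hx.2]

lemma log_gaussianPDFReal_zero_one (x : ℝ) :
    log (gaussianPDFReal 0 1 x) = -log (2 * π) / 2 - x ^ 2 / 2 := by
  rw [gaussianPDFReal_def, log_mul (by positivity) (exp_ne_zero _), log_inv, log_exp,
    log_sqrt (by positivity)]
  push_cast
  rw [mul_one, mul_one, sub_zero]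
  ring

def jointTail (α β η σ : ℝ) : Set (ℝ × ℝ) := {p | η ≤ p.1 ∧ σ ≤ α * p.1 + β * p.2}

section JointTail

variable {α β η σ : ℝ}

lemma gaussianReal_prod_real_jointTail_le (hαβ : α ^ 2 + β ^ 2 = 1) (hβ : β ≠ 0)
    (hη : α * σ ≤ η) (hσ : α * η ≤ σ) :
    ((gaussianReal 0 1).prod (gaussianReal 0 1)).real (jointTail α β η σ)
      ≤ exp (-(η ^ 2 + σ ^ 2 - 2 * α * η * σ) / (2 * β ^ 2)) := by
  have hβ2 : 0 < β ^ 2 := by positivity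
  set t := (η - α * σ) / β ^ 2
  set u := (σ - α * η) / β ^ 2
  have ht : 0 ≤ t := div_nonneg (by linarith) hβ2.le
  have hu : 0 ≤ u := div_nonneg (by linarith) hβ2.le
  have hsub : jointTail α β η σ ⊆ {p | t * η + u * σ ≤ (t + u * α) * p.1 + (u * β) * p.2} := by
    rintro p ⟨h₁, h₂⟩
    show t * η + u * σ ≤ _
    nlinarith [mul_le_mul_of_nonneg_left h₁ ht, mul_le_mul_of_nonneg_left h₂ hu]
  calc _ ≤ _ := measureReal_mono hsub
    _ ≤ _ := gaussianReal_prod_real_linear_ge_le_exp _ _ _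
    _ = _ := by
      have hβα : β ^ 2 = 1 - α ^ 2 := by linarith
      have h1α : 1 - α ^ 2 ≠ 0 := hβα ▸ hβ2.ne'
      simp only [t, u]
      rw [mul_pow, hβα]
      congr 1
      field_simp
      ring

lemma gaussianPDFReal_mul_le_gaussianReal_prod_real_jointTail (hα : -1 ≤ α) (hβ : 0 < β)
    (hη : 0 ≤ η) (hσ : α * η ≤ σ) :
    gaussianPDFReal 0 1 (η + 1) * gaussianPDFReal 0 1 ((σ - α * η + 1) / β + 1)
      ≤ ((gaussianReal 0 1).prod (gaussianReal 0 1)).real (jointTail α β η σ) := by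
  set c := (σ - α * η + 1) / β
  have hc : 0 ≤ c := div_nonneg (by linarith) hβ.le
  have hβc : β * c = σ - α * η + 1 := mul_div_cancel₀ _ hβ.ne'
  have hbox : Set.Icc η (η + 1) ×ˢ Set.Icc c (c + 1) ⊆ jointTail α β η σ := by
    rintro ⟨x, y⟩ ⟨⟨hx₁, hx₂⟩, hy, -⟩
    refine ⟨hx₁, ?_⟩
    nlinarith [mul_le_mul_of_nonneg_left hy hβ.le]
  calc _ ≤ (gaussianReal 0 1).real (Set.Icc η (η + 1))
          * (gaussianReal 0 1).real (Set.Icc c (c + 1)) :=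
        mul_le_mul (gaussianPDFReal_add_one_le_gaussianReal_real_Icc hη)
          (gaussianPDFReal_add_one_le_gaussianReal_real_Icc hc)
          (gaussianPDFReal_nonneg 0 1 _) measureReal_nonneg
    _ ≤ _ := by
      rw [← measureReal_prod_prod]
      exact measureReal_mono hbox

lemma neg_log_gaussianReal_prod_real_jointTail_le (hα : -1 ≤ α) (hβ : 0 < β) (hη : 0 ≤ η)
    (hσ : α * η ≤ σ) :
    -2 * β ^ 2 * log (((gaussianReal 0 1).prod (gaussianReal 0 1)).real (jointTail α β η σ))
      ≤ β ^ 2 * (η + 1) ^ 2 + (σ - α * η + 1 + β) ^ 2 + 2 * β ^ 2 * log (2 * π) := by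
  have hlow := gaussianPDFReal_mul_le_gaussianReal_prod_real_jointTail hα hβ hη hσ
  have hlog := log_le_log (by unfold gaussianPDFReal; positivity) hlow
  rw [log_mul (by unfold gaussianPDFReal; positivity) (by unfold gaussianPDFReal; positivity),
    log_gaussianPDFReal_zero_one, log_gaussianPDFReal_zero_one] at hlog
  have hβc : β ^ 2 * ((σ - α * η + 1) / β + 1) ^ 2 = (σ - α * η + 1 + β) ^ 2 := by
    field_simp
  generalize (σ - α * η + 1) / β = c at hlog hβc
  nlinarith [mul_le_mul_of_nonneg_left hlog (by positivity : (0 : ℝ) ≤ 2 * β ^ 2)]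

lemma le_neg_log_gaussianReal_prod_real_jointTail (hαβ : α ^ 2 + β ^ 2 = 1) (hβ : 0 < β)
    (hη₀ : 0 ≤ η) (hη : α * σ ≤ η) (hσ : α * η ≤ σ) :
    η ^ 2 + σ ^ 2 - 2 * α * η * σ
      ≤ -2 * β ^ 2 *
          log (((gaussianReal 0 1).prod (gaussianReal 0 1)).real (jointTail α β η σ)) := by
  have hα : -1 ≤ α := by nlinarith
  have hpos : 0 < ((gaussianReal 0 1).prod (gaussianReal 0 1)).real (jointTail α β η σ) :=
    lt_of_lt_of_le (by unfold gaussianPDFReal; positivity)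
      (gaussianPDFReal_mul_le_gaussianReal_prod_real_jointTail hα hβ hη₀ hσ)
  have hlog := log_le_log hpos (gaussianReal_prod_real_jointTail_le hαβ hβ.ne' hη hσ)
  rw [log_exp, le_div_iff₀ (by positivity)] at hlog
  linarith

end JointTail

lemma tendsto_div_mul_sq_of_le_of_le_add {f : ℝ → ℝ} {D a b : ℝ} (hD : 0 < D)
    (hlo : ∀ᶠ x in atTop, D * x ^ 2 ≤ f x) (hhi : ∀ᶠ x in atTop, f x ≤ D * x ^ 2 + a * x + b) :
    Tendsto (fun x => f x / (D * x ^ 2)) atTop (𝓝 1) := by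
  have hbound : Tendsto (fun x : ℝ => 1 + a / D * x⁻¹ + b / D * x⁻¹ ^ 2) atTop (𝓝 1) := by
    simpa using ((tendsto_inv_atTop_zero.const_mul (a / D)).const_add 1).add
      ((tendsto_inv_atTop_zero.pow 2).const_mul (b / D))
  refine tendsto_of_tendsto_of_tendsto_of_le_of_le' tendsto_const_nhds hbound ?_ ?_
  · filter_upwards [hlo, eventually_gt_atTop 0] with x hx hx₀
    rwa [one_le_div (by positivity)]
  · filter_upwards [hhi, eventually_gt_atTop 0] with x hx hx₀
    calc f x / (D * x ^ 2) ≤ (D * x ^ 2 + a * x + b) / (D * x ^ 2) := by gcongr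
      _ = _ := by field_simp

theorem gaussian_pair_tail_asymptotics_general (α lam : ℝ) (hα₁ : -1 < α) (hα₂ : α < 1)
    (hlamα : α < lam) (hlamα' : lam * α < 1) :
    Filter.Tendsto
      (fun η : ℝ =>
        (-2 * Real.sqrt (1 - α ^ 2) ^ 2 *
          Real.log (((stdGaussian.prod stdGaussian)
            {p : ℝ × ℝ | η ≤ p.1 ∧ lam * η ≤ α * p.1 + Real.sqrt (1 - α ^ 2) * p.2}).toReal))
          / ((1 + lam ^ 2 - 2 * lam * α) * η ^ 2))
      Filter.atTop (nhds 1) := by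
  set β := √(1 - α ^ 2)
  have hβ : 0 < β := sqrt_pos.2 (by nlinarith)
  have hαβ : α ^ 2 + β ^ 2 = 1 := by rw [sq_sqrt (by nlinarith)]; ring
  rw [stdGaussian_eq_gaussianReal]
  refine tendsto_div_mul_sq_of_le_of_le_add (by nlinarith)
    (a := 2 * β ^ 2 + 2 * (lam - α) * (1 + β))
    (b := β ^ 2 + (1 + β) ^ 2 + 2 * β ^ 2 * log (2 * π)) ?_ ?_
    <;> filter_upwards [eventually_ge_atTop 0] with η hη
  · exact le_of_eq_of_le (by ring)
      (le_neg_log_gaussianReal_prod_real_jointTail hαβ hβ hη (by nlinarith) (by nlinarith))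
  · exact le_of_le_of_eq
      (neg_log_gaussianReal_prod_real_jointTail_le (σ := lam * η) hα₁.le hβ hη (by nlinarith))
      (by linear_combination η ^ 2 * hαβ)

/-- For independent standard normals `X, Y`, `α ∈ (−1,1)`, `β = √(1−α²)`, and
`G(η, σ) := ℙ(X ≥ η and αX + βY ≥ σ)`, if `λ > 0`, `λ > α`, and `λα < 1`, then along `σ = λη`
one has `G(η, λη) = exp(−(1+o(1))·(η² + (λη)² − 2·η·(λη)·α)/(2β²))` as `η → ∞`; that is,
`(−2β²·log G(η, λη)) / ((1 + λ² − 2λα)·η²) → 1`. -/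
theorem gaussian_pair_tail_asymptotics (α lam : ℝ) (hα₁ : -1 < α) (hα₂ : α < 1)
    (hlam : 0 < lam) (hlamα : α < lam) (hlamα' : lam * α < 1) :
    Filter.Tendsto
      (fun η : ℝ =>
        (-2 * Real.sqrt (1 - α ^ 2) ^ 2 *
          Real.log (((stdGaussian.prod stdGaussian)
            {p : ℝ × ℝ | η ≤ p.1 ∧ lam * η ≤ α * p.1 + Real.sqrt (1 - α ^ 2) * p.2}).toReal))
          / ((1 + lam ^ 2 - 2 * lam * α) * η ^ 2))
      Filter.atTop (nhds 1) :=
  gaussian_pair_tail_asymptotics_general α lam hα₁ hα₂ hlamα hlamα'
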